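/- For the Chebyshev-associated orthonormal polynomials P^T_n (P^T_0 = 1, P^T_n(ω) = √2 · T_n(ω/π) for n > 0), and any 0 < ω < π: (1/(n+1)) Σ_{k=0}^{n} P^T_k(ω)² = (1+2n)/(2n+2) + sin((2n+1) arccos(ω/π)) / ((2n+2)√(1−(ω/π)²)), hence this average converges to 1 as n → ∞. -/

import Mathlib

/-!
Substituting `ω / π = cos θ` turns `T_k(ω/π)` into `cos (k θ)`, so `(P^T_k)² = 1 + cos (2 k θ)` for
`k ≥ 1`. The sum of `cos (2 k θ)` over `k ≤ n` is a Dirichlet kernel,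
`(sin ((2n+1) θ) / sin θ + 1) / 2`, which is bounded in `n` when `sin θ ≠ 0`; hence the average
of the squares is `1 + O(1/n)`.
-/

open Filter Real

/-- The rescaled orthonormal Chebyshev polynomials: `P^T_0 = 1`,
`P^T_n(ω) = √2 T_n(ω/π)` for `n > 0`. -/
noncomputable def chebP (n : ℕ) (ω : ℝ) : ℝ :=
  if n = 0 then 1
  else Real.sqrt 2 * (Polynomial.Chebyshev.T ℝ (n : ℤ)).eval (ω / Real.pi)

open Finset Polynomial.Chebyshev

theorem two_mul_sin_mul_sum_range_cos_two_mul (θ : ℝ) (n : ℕ) :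
    2 * sin θ * ∑ k ∈ range (n + 1), cos (2 * k * θ) = sin ((2 * n + 1) * θ) + sin θ := by
  have h : sin θ * ∑ k ∈ range (n + 1), cos (2 * k * θ) = sin ((n + 1) * θ) * cos (n * θ) := by
    convert Real.sin_mul_sum_cos (n + 1) (2 * θ) 0 using 3 <;> push_cast <;> ring_nf
  rw [mul_assoc, h, ← mul_assoc, two_mul_sin_mul_cos]
  ring_nf

theorem chebP_of_ne_zero {k : ℕ} (hk : k ≠ 0) {ω θ : ℝ} (hθ : cos θ = ω / π) :
    chebP k ω = √2 * cos (k * θ) := by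
  rw [chebP, if_neg hk, ← hθ, T_real_cos, Int.cast_natCast]

theorem chebP_sq {ω θ : ℝ} (hθ : cos θ = ω / π) (k : ℕ) :
    chebP k ω ^ 2 = 1 + cos (2 * k * θ) - if k = 0 then 1 else 0 := by
  rcases eq_or_ne k 0 with rfl | hk
  · simp [chebP]
  · rw [chebP_of_ne_zero hk hθ, if_neg hk, mul_pow, sq_sqrt zero_le_two, mul_assoc, cos_two_mul]
    ring

theorem sum_range_chebP_sq {ω θ : ℝ} (hθ : cos θ = ω / π) (hsin : sin θ ≠ 0) (n : ℕ) :
    ∑ k ∈ range (n + 1), chebP k ω ^ 2 = n + 1 + (sin ((2 * n + 1) * θ) / sin θ - 1) / 2 := by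
  have hcos : ∑ k ∈ range (n + 1), cos (2 * k * θ) = (sin ((2 * n + 1) * θ) / sin θ + 1) / 2 := by
    rw [eq_div_iff two_ne_zero, div_add_one hsin, eq_div_iff hsin,
      ← two_mul_sin_mul_sum_range_cos_two_mul]
    ring
  simp only [chebP_sq hθ, sum_sub_distrib, sum_add_distrib, sum_ite_eq', mem_range,
    Nat.zero_lt_succ, if_true, sum_const, card_range, nsmul_eq_mul, mul_one, hcos]
  push_cast
  ring

theorem tendsto_one_add_div_two_mul_add_one {u : ℕ → ℝ} {C : ℝ} (hu : ∀ n, |u n| ≤ C) :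
    Tendsto (fun n : ℕ => 1 + u n / (2 * (n + 1))) atTop (nhds 1) := by
  have hinv : Tendsto (fun n : ℕ => (2 * ((n : ℝ) + 1))⁻¹) atTop (nhds 0) :=
    tendsto_inv_atTop_zero.comp <| tendsto_atTop_add_const_right _ 1
      tendsto_natCast_atTop_atTop |>.const_mul_atTop two_pos
  have hbdd : IsBoundedUnder (· ≤ ·) atTop (fun n => ‖u n‖) := isBoundedUnder_of ⟨C, hu⟩
  simpa [div_eq_mul_inv] using tendsto_const_nhds.add (isBoundedUnder_le_mul_tendsto_zero hbdd hinv)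

/-- For any `0 < ω < π`,
`(1/(n+1)) Σ_{k=0}^{n} P^T_k(ω)² = (1+2n)/(2n+2)
  + sin((2n+1) arccos(ω/π)) / ((2n+2)√(1−(ω/π)²))`,
hence this average converges to `1` as `n → ∞`. -/
theorem chebP_sum_sq_avg (ω : ℝ) (hω0 : 0 < ω) (hωπ : ω < Real.pi) :
    (∀ n : ℕ,
      (1 / ((n : ℝ) + 1)) * ∑ k ∈ Finset.range (n + 1), chebP k ω ^ 2 =
        (1 + 2 * (n : ℝ)) / (2 * n + 2) +
          Real.sin ((2 * (n : ℝ) + 1) * Real.arccos (ω / Real.pi)) /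
            ((2 * (n : ℝ) + 2) * Real.sqrt (1 - (ω / Real.pi) ^ 2))) ∧
    Tendsto
      (fun n : ℕ =>
        (1 / ((n : ℝ) + 1)) * ∑ k ∈ Finset.range (n + 1), chebP k ω ^ 2)
      atTop (nhds 1) := by
  set θ := arccos (ω / π)
  have hx0 : 0 < ω / π := div_pos hω0 pi_pos
  have hx1 : ω / π < 1 := (div_lt_one pi_pos).mpr hωπ
  have hcos : cos θ = ω / π := cos_arccos (by linarith) hx1.le
  have hsin : 0 < sin θ :=
    sin_pos_of_pos_of_lt_pi (arccos_pos.mpr hx1) (arccos_lt_pi.mpr (by linarith))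
  have havg (n : ℕ) : (1 / ((n : ℝ) + 1)) * ∑ k ∈ range (n + 1), chebP k ω ^ 2 =
      1 + (sin ((2 * n + 1) * θ) / sin θ - 1) / (2 * (n + 1)) := by
    rw [sum_range_chebP_sq hcos hsin.ne' n]
    field_simp
  refine ⟨fun n => ?_, ?_⟩
  · rw [havg, sin_arccos]
    field_simp
    ring
  · simp_rw [havg]
    refine tendsto_one_add_div_two_mul_add_one (C := 1 / sin θ + 1) fun n => ?_
    grw [abs_sub, abs_div, abs_of_pos hsin, abs_sin_le_one, abs_one]
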